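/- arXiv:1407.1708 — 3 statements merged into one kernel-verified Lean document; each statement's English description precedes it below -/
import Mathlib

section
/- Let B : X → Y' be bounded linear between Hilbert spaces, with ⟨Bw, v⟩ =: b(w,v), satisfying the inf-sup condition with constant β(μ) > 0: for all w ∈ X, sup_{v∈Y} b(w,v)/‖v‖_Y ≥ β‖w‖_X. Let X_N ⊂ X be a finite-dimensional subspace and define the test space Y_N := R_Y' B(X_N), i.e., Y_N = { y ∈ Y : (y, z)_Y = b(w, z) ∀ z ∈ Y, for some w ∈ X_N }. Then inf_{w∈X_N} sup_{v∈Y_N} b(w,v)/(‖w‖_X ‖v‖_Y) ≥ β, i.e., the supremizer test space is inf-sup stable with the same constant β, independently of N. -/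
/-! The Riesz representer `y_w` of `B w` lies in `Y_N` and is the supremizer of `v ↦ (B w) v / ‖v‖`:
`(B w) y_w / ‖y_w‖ = ‖y_w‖² / ‖y_w‖ = ‖B w‖`. Since no quotient exceeds `‖B w‖`, the supremum over
`Y_N` equals `‖B w‖ ≥ β ‖w‖`. -/

open InnerProductSpace

section DivNorm

variable {E : Type*} [NormedAddCommGroup E] [NormedSpace ℝ E]

theorem StrongDual.apply_div_norm_le (f : StrongDual ℝ E) (v : E) : f v / ‖v‖ ≤ ‖f‖ :=
  div_le_of_le_mul₀ (norm_nonneg v) (norm_nonneg f) ((le_abs_self _).trans (f.le_opNorm v))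

end DivNorm

section Riesz

variable {Y : Type*} [NormedAddCommGroup Y] [InnerProductSpace ℝ Y] [CompleteSpace Y]

/-- For `f = 0` the left side is the junk value `0 / 0 = 0`, so no case split is needed. -/
theorem StrongDual.apply_toDual_symm_div_norm (f : StrongDual ℝ Y) :
    f ((toDual ℝ Y).symm f) / ‖(toDual ℝ Y).symm f‖ = ‖f‖ := by
  set y := (toDual ℝ Y).symm f
  have hfy : f y = ‖y‖ ^ 2 := by
    rw [← toDual_symm_apply, real_inner_self_eq_norm_sq]
  rw [hfy, sq, mul_self_div_self, LinearIsometryEquiv.norm_map]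

theorem StrongDual.iSup_apply_div_norm_eq_norm {S : Set Y} (f : StrongDual ℝ Y)
    (hS : (toDual ℝ Y).symm f ∈ S) : ⨆ v : S, f v / ‖(v : Y)‖ = ‖f‖ := by
  have : Nonempty S := ⟨⟨_, hS⟩⟩
  refine le_antisymm (ciSup_le fun v => f.apply_div_norm_le v) ?_
  calc ‖f‖ = f ((toDual ℝ Y).symm f) / ‖(toDual ℝ Y).symm f‖ :=
        (f.apply_toDual_symm_div_norm).symm
    _ ≤ ⨆ v : S, f v / ‖(v : Y)‖ :=
        le_ciSup (f := fun v : S => f v / ‖(v : Y)‖)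
          ⟨‖f‖, by rintro _ ⟨v, rfl⟩; exact f.apply_div_norm_le v⟩ ⟨_, hS⟩

end Riesz

theorem stmt_8_general
    {X Y : Type*} [NormedAddCommGroup X] [InnerProductSpace ℝ X]
    [NormedAddCommGroup Y] [InnerProductSpace ℝ Y] [CompleteSpace Y]
    (B : X →L[ℝ] StrongDual ℝ Y)
    (β : ℝ)
    (hinfsup : ∀ w, β * ‖w‖ ≤ ‖B w‖)
    (XN : Submodule ℝ X)
    (YN : Set Y)
    (hYN : YN = {y : Y | ∃ w ∈ XN, ∀ z : Y, (inner ℝ y z : ℝ) = B w z}) :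
    ∀ w ∈ XN, β * ‖w‖ ≤ ⨆ v : YN, B w (v : Y) / ‖(v : Y)‖ := by
  intro w hw
  have hrep : (toDual ℝ Y).symm (B w) ∈ YN := by
    rw [hYN]
    exact ⟨w, hw, fun z => toDual_symm_apply⟩
  rw [(B w).iSup_apply_div_norm_eq_norm hrep]
  exact hinfsup w

/-- the supremizer test space Y_N = R_Y' B(X_N) is inf-sup stable
with the same constant β, independently of N. -/
theorem stmt_8
    {X Y : Type*} [NormedAddCommGroup X] [InnerProductSpace ℝ X] [CompleteSpace X]
    [NormedAddCommGroup Y] [InnerProductSpace ℝ Y] [CompleteSpace Y]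
    (B : X →L[ℝ] StrongDual ℝ Y)
    (β : ℝ) (hβ : 0 < β)
    (hinfsup : ∀ w, β * ‖w‖ ≤ ‖B w‖)
    (XN : Submodule ℝ X) [FiniteDimensional ℝ XN]
    (YN : Set Y)
    (hYN : YN = {y : Y | ∃ w ∈ XN, ∀ z : Y, (inner ℝ y z : ℝ) = B w z}) :
    ∀ w ∈ XN, β * ‖w‖ ≤ ⨆ v : YN, B w (v : Y) / ‖(v : Y)‖ :=
  stmt_8_general B β hinfsup XN YN hYN
end

section
/- Let B : X → Y' be bounded (constant γ) and bounded below (β‖u‖ ≤ ‖Bu‖_{Y'}) and boundedly invertible, u the solution of Bu = f, X_h ⊂ X finite-dimensional, and ū_h the Galerkin solution of the normal equations (B ū_h, B w_h)_{Y'} = (f, B w_h)_{Y'} ∀ w_h ∈ X_h. Let A := B⁺B and r_a(w) := B⁺f − Aw ∈ X'. Then ‖r_a(ū_h)‖_{X'} ≤ (γ/β)·inf_{w_h ∈ X_h} ‖r_a(w_h)‖_{X'}. -/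
/-!
The normal-equation Galerkin solution `ū_h` is the best approximation of `f` from `B X_h` in
the `Y'`-norm, since `f - B ū_h` is `Y'`-orthogonal to `B X_h`. The residual `r_a(w) = B⁺(f - Bw)`
satisfies `β ‖f - Bw‖ ≤ ‖r_a(w)‖ ≤ γ ‖f - Bw‖`: the upper bound is Cauchy–Schwarz, the lower bound
tests with `x = u - w`, for which `Bx = f - Bw`. Chaining these gives the factor `γ / β`.
-/

open InnerProductSpace

theorem norm_le_norm_add_of_inner_eq_zero {E : Type*} [NormedAddCommGroup E]
    [InnerProductSpace ℝ E] {a b : E} (h : inner ℝ a b = 0) : ‖a‖ ≤ ‖a + b‖ := by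
  have hpyth : ‖a + b‖ * ‖a + b‖ = ‖a‖ * ‖a‖ + ‖b‖ * ‖b‖ :=
    norm_add_sq_eq_norm_sq_add_norm_sq_real h
  nlinarith [norm_nonneg a, norm_nonneg (a + b), mul_self_nonneg ‖b‖]

section Residual

variable {X Y : Type*} [NormedAddCommGroup X] [NormedSpace ℝ X]
  [NormedAddCommGroup Y] [InnerProductSpace ℝ Y] [CompleteSpace Y]

/-- `‖B⁺ρ‖_{X'}` as `sup_x (Bx, ρ)_{Y'} / ‖x‖`; the term at `x = 0` is `0` since `t / 0 = 0`. -/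
noncomputable def transposeDualNorm (B : X →L[ℝ] StrongDual ℝ Y) (ρ : StrongDual ℝ Y) : ℝ :=
  ⨆ x : X, inner ℝ ((toDual ℝ Y).symm (B x)) ((toDual ℝ Y).symm ρ) / ‖x‖

theorem inner_toDual_symm_div_norm_le (B : X →L[ℝ] StrongDual ℝ Y) {γ : ℝ} (hγ0 : 0 ≤ γ)
    (hγ : ∀ v, ‖B v‖ ≤ γ * ‖v‖) (ρ : StrongDual ℝ Y) (x : X) :
    inner ℝ ((toDual ℝ Y).symm (B x)) ((toDual ℝ Y).symm ρ) / ‖x‖ ≤ γ * ‖ρ‖ := by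
  rcases eq_or_ne x 0 with rfl | hx
  · simpa using mul_nonneg hγ0 (norm_nonneg ρ)
  rw [div_le_iff₀ (norm_pos_iff.mpr hx)]
  calc inner ℝ ((toDual ℝ Y).symm (B x)) ((toDual ℝ Y).symm ρ)
      ≤ ‖(toDual ℝ Y).symm (B x)‖ * ‖(toDual ℝ Y).symm ρ‖ := real_inner_le_norm _ _
    _ = ‖B x‖ * ‖ρ‖ := by simp only [LinearIsometryEquiv.norm_map]
    _ ≤ γ * ‖x‖ * ‖ρ‖ := mul_le_mul_of_nonneg_right (hγ x) (norm_nonneg ρ)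
    _ = γ * ‖ρ‖ * ‖x‖ := by ring

theorem transposeDualNorm_le (B : X →L[ℝ] StrongDual ℝ Y) {γ : ℝ} (hγ0 : 0 ≤ γ)
    (hγ : ∀ v, ‖B v‖ ≤ γ * ‖v‖) (ρ : StrongDual ℝ Y) :
    transposeDualNorm B ρ ≤ γ * ‖ρ‖ :=
  ciSup_le (inner_toDual_symm_div_norm_le B hγ0 hγ ρ)

theorem le_transposeDualNorm (B : X →L[ℝ] StrongDual ℝ Y) {γ β : ℝ} (hγ0 : 0 ≤ γ)
    (hγ : ∀ v, ‖B v‖ ≤ γ * ‖v‖) {x₀ : X} (hβx₀ : β * ‖x₀‖ ≤ ‖B x₀‖) :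
    β * ‖B x₀‖ ≤ transposeDualNorm B (B x₀) := by
  have hbdd : BddAbove (Set.range fun x : X =>
      inner ℝ ((toDual ℝ Y).symm (B x)) ((toDual ℝ Y).symm (B x₀)) / ‖x‖) :=
    ⟨γ * ‖B x₀‖, by rintro _ ⟨x, rfl⟩; exact inner_toDual_symm_div_norm_le B hγ0 hγ _ x⟩
  refine le_trans ?_ (le_ciSup hbdd x₀)
  rcases eq_or_ne x₀ 0 with rfl | hx₀
  · simp
  have hx₀pos : 0 < ‖x₀‖ := norm_pos_iff.mpr hx₀
  rw [real_inner_self_eq_norm_sq, LinearIsometryEquiv.norm_map, le_div_iff₀ hx₀pos]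
  calc β * ‖B x₀‖ * ‖x₀‖ = ‖B x₀‖ * (β * ‖x₀‖) := by ring
    _ ≤ ‖B x₀‖ * ‖B x₀‖ := mul_le_mul_of_nonneg_left hβx₀ (norm_nonneg _)
    _ = ‖B x₀‖ ^ 2 := by ring

theorem transposeDualNorm_of_subsingleton [Subsingleton X] (B : X →L[ℝ] StrongDual ℝ Y)
    (ρ : StrongDual ℝ Y) : transposeDualNorm B ρ = 0 := by
  simp [transposeDualNorm, Subsingleton.elim _ (0 : X)]

end Residual

theorem norm_sub_le_of_normal_equations {X Y : Type*} [AddCommGroup X] [Module ℝ X]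
    [NormedAddCommGroup Y] [InnerProductSpace ℝ Y] [CompleteSpace Y]
    (B : X →ₗ[ℝ] StrongDual ℝ Y) (f : StrongDual ℝ Y) {Xh : Submodule ℝ X} {uh : X}
    (huh : uh ∈ Xh)
    (hNE : ∀ wh ∈ Xh, inner ℝ ((toDual ℝ Y).symm (B uh)) ((toDual ℝ Y).symm (B wh)) =
      inner ℝ ((toDual ℝ Y).symm f) ((toDual ℝ Y).symm (B wh)))
    {wh : X} (hwh : wh ∈ Xh) :
    ‖f - B uh‖ ≤ ‖f - B wh‖ := by
  set J := (toDual ℝ Y).symm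
  have horth : inner ℝ (J (f - B uh)) (J (B (uh - wh))) = 0 := by
    rw [map_sub J, inner_sub_left, hNE _ (sub_mem huh hwh), sub_self]
  have hsplit : f - B wh = (f - B uh) + B (uh - wh) := by
    rw [map_sub]; abel
  calc ‖f - B uh‖ = ‖J (f - B uh)‖ := (J.norm_map _).symm
    _ ≤ ‖J (f - B uh) + J (B (uh - wh))‖ := norm_le_norm_add_of_inner_eq_zero horth
    _ = ‖f - B wh‖ := by rw [← map_add, J.norm_map, ← hsplit]

theorem nonneg_of_norm_le_mul_norm {X E : Type*} [NormedAddCommGroup X] [Nontrivial X]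
    [SeminormedAddCommGroup E] (g : X → E) {γ β : ℝ} (hβ : 0 < β)
    (hγ : ∀ v, ‖g v‖ ≤ γ * ‖v‖) (hβg : ∀ v, β * ‖v‖ ≤ ‖g v‖) : 0 ≤ γ := by
  obtain ⟨v, hv⟩ := exists_ne (0 : X)
  have hvpos : 0 < ‖v‖ := norm_pos_iff.mpr hv
  nlinarith [hγ v, hβg v]

theorem stmt_16_general
    {X Y : Type*} [NormedAddCommGroup X] [InnerProductSpace ℝ X]
    [NormedAddCommGroup Y] [InnerProductSpace ℝ Y] [CompleteSpace Y]
    (B : X →L[ℝ] StrongDual ℝ Y)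
    (γ β : ℝ) (hβ : 0 < β)
    (hγ : ∀ v, ‖B v‖ ≤ γ * ‖v‖)
    (hβB : ∀ v, β * ‖v‖ ≤ ‖B v‖)
    (f : StrongDual ℝ Y) (u : X) (hu : B u = f)
    (Xh : Submodule ℝ X)
    (uh : X) (huh : uh ∈ Xh)
    (hNE : ∀ wh ∈ Xh,
      (inner ℝ ((InnerProductSpace.toDual ℝ Y).symm (B uh))
        ((InnerProductSpace.toDual ℝ Y).symm (B wh)) : ℝ) =
      (inner ℝ ((InnerProductSpace.toDual ℝ Y).symm f)
        ((InnerProductSpace.toDual ℝ Y).symm (B wh)) : ℝ))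
    (raNorm : X → ℝ)
    (hra : ∀ w : X, raNorm w = ⨆ x : X,
      (inner ℝ ((InnerProductSpace.toDual ℝ Y).symm (B x))
        ((InnerProductSpace.toDual ℝ Y).symm (f - B w)) : ℝ) / ‖x‖) :
    raNorm uh ≤ (γ / β) * ⨅ wh : Xh, raNorm (wh : X) := by
  replace hra : ∀ w, raNorm w = transposeDualNorm B (f - B w) := hra
  rcases subsingleton_or_nontrivial X with hX | hX
  · simp [hra, transposeDualNorm_of_subsingleton]
  have hγ0 : 0 ≤ γ := nonneg_of_norm_le_mul_norm B hβ hγ hβB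
  have hres : ∀ w, f - B w = B (u - w) := fun w => by rw [map_sub, hu]
  rw [Real.mul_iInf_of_nonneg (by positivity)]
  refine le_ciInf fun wh => ?_
  calc raNorm uh ≤ γ * ‖f - B uh‖ := hra uh ▸ transposeDualNorm_le B hγ0 hγ _
    _ ≤ γ * ‖f - B wh‖ := by
      gcongr
      exact norm_sub_le_of_normal_equations B.toLinearMap f huh hNE wh.2
    _ = γ / β * (β * ‖B (u - wh)‖) := by rw [hres]; field_simp
    _ ≤ γ / β * raNorm wh := by
      gcongr
      rw [hra, hres]
      exact le_transposeDualNorm B hγ0 hγ (hβB _)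

/-- ‖r_a(ū_h)‖_{X'} ≤ (γ/β)·inf_{w_h∈X_h}‖r_a(w_h)‖_{X'}, where
r_a(w) = B⁺f − B⁺Bw, i.e. ⟨r_a(w), x⟩ = (Bx, f − Bw)_{Y'}, and its X'-norm is
sup_x ⟨r_a(w), x⟩/‖x‖. -/
theorem stmt_16
    {X Y : Type*} [NormedAddCommGroup X] [InnerProductSpace ℝ X] [CompleteSpace X]
    [NormedAddCommGroup Y] [InnerProductSpace ℝ Y] [CompleteSpace Y]
    (B : X →L[ℝ] StrongDual ℝ Y)
    (hB : Function.Bijective B)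
    (γ β : ℝ) (hβ : 0 < β)
    (hγ : ∀ v, ‖B v‖ ≤ γ * ‖v‖)
    (hβB : ∀ v, β * ‖v‖ ≤ ‖B v‖)
    (f : StrongDual ℝ Y) (u : X) (hu : B u = f)
    (Xh : Submodule ℝ X) [FiniteDimensional ℝ Xh]
    (uh : X) (huh : uh ∈ Xh)
    (hNE : ∀ wh ∈ Xh,
      (inner ℝ ((InnerProductSpace.toDual ℝ Y).symm (B uh))
        ((InnerProductSpace.toDual ℝ Y).symm (B wh)) : ℝ) =
      (inner ℝ ((InnerProductSpace.toDual ℝ Y).symm f)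
        ((InnerProductSpace.toDual ℝ Y).symm (B wh)) : ℝ))
    (raNorm : X → ℝ)
    (hra : ∀ w : X, raNorm w = ⨆ x : X,
      (inner ℝ ((InnerProductSpace.toDual ℝ Y).symm (B x))
        ((InnerProductSpace.toDual ℝ Y).symm (f - B w)) : ℝ) / ‖x‖) :
    raNorm uh ≤ (γ / β) * ⨅ wh : Xh, raNorm (wh : X) :=
  stmt_16_general B γ β hβ hγ hβB f u hu Xh uh huh hNE raNorm hra
end

section
/- Let a be symmetric, coercive (constant α) and continuous (constant γ) on a Hilbert space X, u the solution of Au = f, X_h ⊂ X a subspace, and u_h the Galerkin solution on X_h. Then the residual satisfies ‖f − A u_h‖_{X'} ≤ √(γ/α)·inf_{w_h ∈ X_h} ‖f − A w_h‖_{X'}. -/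
/-!
Write `‖e‖ₐ = √(a e e)` for the energy norm. Since `f - a w = a (u - w)`, the energy-dual norm of a
residual `f - a w` is `‖u - w‖ₐ`, and Galerkin orthogonality makes `u_h` the `‖·‖ₐ`-best
approximation of `u` in `X_h`. It remains to compare the dual norm `‖a e‖` with `‖e‖ₐ`:
Cauchy–Schwarz for `a` and continuity give `‖a e‖ ≤ √γ ‖e‖ₐ`, coercivity gives `√α ‖e‖ₐ ≤ ‖a e‖`.
-/

namespace ContinuousLinearMap

variable {E : Type*} [NormedAddCommGroup E] [NormedSpace ℝ E] (a : E →L[ℝ] E →L[ℝ] ℝ)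

theorem apply_self_le_apply_add_self (hs : ∀ v, 0 ≤ a v v) (hsym : ∀ v w, a v w = a w v)
    {x y : E} (hxy : a x y = 0) : a x x ≤ a (x + y) (x + y) := by
  have hyx : a y x = 0 := hsym y x ▸ hxy
  simp only [map_add, add_apply, hxy, hyx]
  linarith [hs y]

theorem norm_apply_le_sqrt_mul_sqrt_apply_self (hs : ∀ v, 0 ≤ a v v)
    (hsym : ∀ v w, a v w = a w v) {γ : ℝ} (hγ : ∀ v, a v v ≤ γ * ‖v‖ ^ 2) (e : E) :
    ‖a e‖ ≤ √γ * √(a e e) := by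
  refine opNorm_le_bound _ (by positivity) fun v ↦ ?_
  have cauchy_schwarz : a e v ^ 2 ≤ a e e * a v v := by
    simpa only [sq, toLinearMap₁₂_apply_apply_apply, hsym v e] using
      LinearMap.BilinForm.apply_mul_apply_le_of_forall_zero_le a.toLinearMap₁₂ hs e v
  calc ‖a e v‖ = |a e v| := Real.norm_eq_abs _
    _ ≤ √(a e e * a v v) := Real.abs_le_sqrt cauchy_schwarz
    _ ≤ √(a e e) * √(γ * ‖v‖ ^ 2) := by
      rw [← Real.sqrt_mul (hs e)]
      gcongr
      · exact hs e
      · exact hγ v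
    _ = √γ * √(a e e) * ‖v‖ := by
      rw [Real.sqrt_mul' _ (sq_nonneg _), Real.sqrt_sq (norm_nonneg _)]
      ring

variable {a}

theorem mul_norm_le_norm_apply {α : ℝ} (hcoer : ∀ w, α * ‖w‖ ^ 2 ≤ a w w) (w : E) :
    α * ‖w‖ ≤ ‖a w‖ := by
  rcases (norm_nonneg w).eq_or_lt with hw | hw
  · rw [← hw, mul_zero]
    exact norm_nonneg _
  refine le_of_mul_le_mul_right ?_ hw
  calc α * ‖w‖ * ‖w‖ = α * ‖w‖ ^ 2 := by ring
    _ ≤ a w w := hcoer w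
    _ ≤ ‖a w‖ * ‖w‖ := (Real.le_norm_self _).trans ((a w).le_opNorm w)

theorem sqrt_mul_sqrt_apply_self_le_norm_apply {α : ℝ} (hα : 0 < α)
    (hcoer : ∀ w, α * ‖w‖ ^ 2 ≤ a w w) (w : E) : √α * √(a w w) ≤ ‖a w‖ := by
  have h₁ : a w w ≤ ‖a w‖ * ‖w‖ := (Real.le_norm_self _).trans ((a w).le_opNorm w)
  have h₂ := mul_norm_le_norm_apply hcoer w
  rw [← Real.sqrt_mul hα.le, ← Real.sqrt_sq (norm_nonneg (a w))]
  gcongr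
  nlinarith [norm_nonneg (a w)]

end ContinuousLinearMap

theorem stmt_17_general
    {X : Type*} [NormedAddCommGroup X] [InnerProductSpace ℝ X]
    (a : X →L[ℝ] X →L[ℝ] ℝ) (f : StrongDual ℝ X)
    (γ α : ℝ) (hα : 0 < α)
    (hsym : ∀ v w, a v w = a w v)
    (hcont : ∀ v w, a v w ≤ γ * ‖v‖ * ‖w‖)
    (hcoer : ∀ w, α * ‖w‖ ^ 2 ≤ a w w)
    (u : X) (hu : ∀ v, a u v = f v)
    (Xh : Submodule ℝ X)
    (uh : X) (huh : uh ∈ Xh)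
    (hGal : ∀ v ∈ Xh, a uh v = f v) :
    ‖f - a uh‖ ≤ Real.sqrt (γ / α) * ⨅ wh : Xh, ‖f - a (wh : X)‖ := by
  have hs : ∀ v, 0 ≤ a v v := fun v ↦ (by positivity : 0 ≤ α * ‖v‖ ^ 2).trans (hcoer v)
  have hγ : ∀ v, a v v ≤ γ * ‖v‖ ^ 2 := fun v ↦ (hcont v v).trans_eq (by ring)
  have residual (w : X) : f - a w = a (u - w) := by
    ext v
    simp [hu]
  have energy_min (wh : Xh) : a (u - uh) (u - uh) ≤ a (u - wh) (u - wh) := by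
    have hsplit : u - wh = (u - uh) + (uh - wh) := by abel
    rw [hsplit]
    refine a.apply_self_le_apply_add_self hs hsym ?_
    simp [hu, hGal _ (Xh.sub_mem huh wh.2)]
  rw [Real.mul_iInf_of_nonneg (Real.sqrt_nonneg _)]
  refine le_ciInf fun wh ↦ ?_
  calc ‖f - a uh‖ = ‖a (u - uh)‖ := by rw [residual]
    _ ≤ √γ * √(a (u - uh) (u - uh)) := a.norm_apply_le_sqrt_mul_sqrt_apply_self hs hsym hγ _
    _ ≤ √γ * √(a (u - wh) (u - wh)) := by gcongr; exact energy_min wh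
    _ ≤ √γ * (‖a (u - wh)‖ / √α) := by
      gcongr
      rw [le_div_iff₀ (Real.sqrt_pos.mpr hα), mul_comm]
      exact ContinuousLinearMap.sqrt_mul_sqrt_apply_self_le_norm_apply hα hcoer _
    _ = √(γ / α) * ‖f - a wh‖ := by
      rw [Real.sqrt_div' _ hα.le, residual]
      ring

/-- Galerkin residual quasi-minimization in the elliptic case:
‖f - A u_h‖_{X'} ≤ √(γ/α)·inf_{w_h∈X_h}‖f - A w_h‖_{X'}. -/
theorem stmt_17
    {X : Type*} [NormedAddCommGroup X] [InnerProductSpace ℝ X] [CompleteSpace X]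
    (a : X →L[ℝ] X →L[ℝ] ℝ) (f : StrongDual ℝ X)
    (γ α : ℝ) (hα : 0 < α)
    (hsym : ∀ v w, a v w = a w v)
    (hcont : ∀ v w, a v w ≤ γ * ‖v‖ * ‖w‖)
    (hcoer : ∀ w, α * ‖w‖ ^ 2 ≤ a w w)
    (u : X) (hu : ∀ v, a u v = f v)
    (Xh : Submodule ℝ X) [FiniteDimensional ℝ Xh]
    (uh : X) (huh : uh ∈ Xh)
    (hGal : ∀ v ∈ Xh, a uh v = f v) :
    ‖f - a uh‖ ≤ Real.sqrt (γ / α) * ⨅ wh : Xh, ‖f - a (wh : X)‖ :=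
  stmt_17_general a f γ α hα hsym hcont hcoer u hu Xh uh huh hGal
end
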